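/- Let s and s' be integer points of F_δ and let π and π' be maximal horizontal-greedy δ-matchings starting at s and s', respectively. If the images of π and π' share a point p = (p₁, p₂), then the paths are identical from p onwards: (image of π) ∩ ([p₁, n] × [p₂, m]) = (image of π') ∩ ([p₁, n] × [p₂, m]). -/

import Mathlib

open Set

noncomputable section

/-- `R : [1, n] → ℝ` is a one-dimensional polygonal curve with vertices
`R 1, …, R n`: it is affine on each interval `[k, k+1]`. -/
def IsPoly1D (R : ℝ → ℝ) (n : ℕ) : Prop :=
  ∀ k : ℕ, 1 ≤ k → k < n → ∀ x ∈ Icc (k : ℝ) ((k : ℝ) + 1),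
    R x = R (k : ℝ) + (x - (k : ℝ)) * (R ((k : ℝ) + 1) - R (k : ℝ))

/-- General position: the vertex values are pairwise distinct. -/
def GeneralPosition (R : ℝ → ℝ) (n : ℕ) : Prop :=
  ∀ k l : ℕ, 1 ≤ k → k ≤ n → 1 ≤ l → l ≤ n → k ≠ l → R (k : ℝ) ≠ R (l : ℝ)

/-- The `δ`-free space `F_δ = {(x,y) ∈ [1,n] × [1,m] : B y − R x ≤ δ}`. -/
def freeSpace (R B : ℝ → ℝ) (n m : ℕ) (δ : ℝ) : Set (ℝ × ℝ) :=
  {p : ℝ × ℝ | p.1 ∈ Icc (1:ℝ) (n : ℝ) ∧ p.2 ∈ Icc (1:ℝ) (m : ℝ) ∧ B p.2 - R p.1 ≤ δ}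

/-- `A i'` is a prefix-minimum of `A[i, ∞)`: `|A i'| ≤ |A x|` for all `x ∈ [i, i']`. -/
def PrefixMin (A : ℝ → ℝ) (i i' : ℤ) : Prop :=
  i ≤ i' ∧ ∀ x ∈ Icc (i : ℝ) (i' : ℝ), |A (i' : ℝ)| ≤ |A x|

/-- A rectilinear path, given by its sequence of vertices (endpoints and
turning points). -/
structure RectPath where
  N : ℕ
  vert : Fin (N + 1) → ℝ × ℝ

/-- The last vertex (endpoint) of a rectilinear path. -/
def RectPath.last (π : RectPath) : ℝ × ℝ := π.vert (Fin.last π.N)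

/-- The image of a rectilinear path: the union of the segments between
consecutive vertices. -/
def RectPath.image (π : RectPath) : Set (ℝ × ℝ) :=
  insert (π.vert 0) (⋃ k : Fin π.N, segment ℝ (π.vert k.castSucc) (π.vert k.succ))

/-- Each edge of the path is an axis-parallel segment, and the path is
nondecreasing in both coordinates. -/
def RectPath.IsRectilinear (π : RectPath) : Prop :=
  ∀ k : Fin π.N,
    ((π.vert k.castSucc).1 = (π.vert k.succ).1 ∧ (π.vert k.castSucc).2 < (π.vert k.succ).2) ∨
    ((π.vert k.castSucc).2 = (π.vert k.succ).2 ∧ (π.vert k.castSucc).1 < (π.vert k.succ).1)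

/-- A prefix-minima `δ`-matching starting at the integer point `s = (i, j)`:
a monotone rectilinear path inside the `δ`-free space starting at `s`, all of
whose vertices are integer points `(i', j')` with `R i'` a prefix-minimum of
`R[i, n]` and `B j'` a prefix-minimum of `B[j, m]`. -/
def IsPMMatching (R B : ℝ → ℝ) (n m : ℕ) (δ : ℝ) (s : ℤ × ℤ) (π : RectPath) : Prop :=
  π.IsRectilinear ∧
  π.vert 0 = ((s.1 : ℝ), (s.2 : ℝ)) ∧
  π.image ⊆ freeSpace R B n m δ ∧
  ∀ k : Fin (π.N + 1), ∃ i' j' : ℤ,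
    π.vert k = ((i' : ℝ), (j' : ℝ)) ∧ PrefixMin R s.1 i' ∧ PrefixMin B s.2 j'

/-- A horizontal-greedy `δ`-matching starting at `s`: a prefix-minima
`δ`-matching that, from any integer prefix-minima point `(i', j')` on it, either
traverses any available horizontal free-space segment `[i', î] × {j'}` towards a
further prefix-minimum `R î`, or terminates at `(i', j')`. -/
def IsHorizGreedy (R B : ℝ → ℝ) (n m : ℕ) (δ : ℝ) (s : ℤ × ℤ) (π : RectPath) : Prop :=
  IsPMMatching R B n m δ s π ∧
  ∀ i' j' : ℤ, ((i' : ℝ), (j' : ℝ)) ∈ π.image →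
    PrefixMin R s.1 i' → PrefixMin B s.2 j' →
    ∀ ihat : ℤ, i' < ihat → PrefixMin R s.1 ihat →
      (Icc (i' : ℝ) (ihat : ℝ) ×ˢ ({(j' : ℝ)} : Set ℝ) ⊆ freeSpace R B n m δ) →
      (Icc (i' : ℝ) (ihat : ℝ) ×ˢ ({(j' : ℝ)} : Set ℝ) ⊆ π.image ∨
        π.last = ((i' : ℝ), (j' : ℝ)))

/-- `C(π)`: the set of integers `i` such that `π` has a vertical edge contained
in the line `x = i`. -/
def vertLines (π : RectPath) : Set ℤ :=
  {i : ℤ | ∃ k : Fin π.N, (π.vert k.castSucc).1 = (i : ℝ) ∧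
    (π.vert k.castSucc).1 = (π.vert k.succ).1}

/-- `R(π)`: the set of integers `j` such that `π` has a horizontal edge contained
in the line `y = j`. -/
def horizLines (π : RectPath) : Set ℤ :=
  {j : ℤ | ∃ k : Fin π.N, (π.vert k.castSucc).2 = (j : ℝ) ∧
    (π.vert k.castSucc).2 = (π.vert k.succ).2}

/-- Two paths are interior-disjoint if their images share no point that is, for
both paths, distinct from that path's two endpoints. -/
def InteriorDisjoint (π π' : RectPath) : Prop :=
  ∀ p ∈ π.image ∩ π'.image,
    (p = π.vert 0 ∨ p = π.last) ∨ (p = π'.vert 0 ∨ p = π'.last)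

/-- A horizontal-greedy `δ`-matching starting at `s` is maximal if it is not a
proper initial portion of another horizontal-greedy `δ`-matching starting at `s`. -/
def IsMaximalHG (R B : ℝ → ℝ) (n m : ℕ) (δ : ℝ) (s : ℤ × ℤ) (π : RectPath) : Prop :=
  IsHorizGreedy R B n m δ s π ∧
  ∀ π' : RectPath, IsHorizGreedy R B n m δ s π' → π.image ⊆ π'.image →
    π'.image = π.image


/-!
The image of a rectilinear monotone path is a chain in the product order on `ℝ × ℝ`, so it
suffices to show that the two paths agree above every common point `q`, by induction on the
number of vertices still ahead of `q`.

If `q` is the end of `π`, it is the end of `π'` too: otherwise the edge of `π'` leaving `q` is a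
free axis-parallel step to a vertex whose coordinates are prefix minima from `s'`, hence from
`s` (the coordinates of `q` are prefix minima from `s` and lie beyond `s'`). Appending the
farthest free horizontal step (or, if there is none, the nearest free vertical one) to `π` then
gives a longer horizontal-greedy matching, against maximality.

Otherwise both paths leave `q` along edges, and these cannot point in different directions.
Say `π` goes right along a free row `y = j` to a prefix minimum `R b`, while `π'` goes up the
line `x = i` from height `c`. Let `e ∈ [c, j]` be an integer minimizing `B` there (it exists
because `B` is affine between integers). Since `B e ≤ B j`, the row `[i, b] × {e}` is free, and
`B e` is a prefix minimum, so horizontal greediness forces `π'` to turn right at `(i, e)` or stop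
there, contradicting that it continues upward. Hence both paths share the segment from `q` to
the nearer of the two edge ends, and the induction hypothesis applies there.
-/

@[simp]
lemma Fin.snoc_castSucc_succ {α : Type*} {n : ℕ} (p : Fin (n + 1) → α) (x : α) (i : Fin n) :
    Fin.snoc (α := fun _ ↦ α) p x i.castSucc.succ = p i.succ := by
  rw [Fin.succ_castSucc, Fin.snoc_castSucc]

lemma Icc_prod_singleton_eq_Icc (a b y : ℝ) : Icc a b ×ˢ ({y} : Set ℝ) = Icc (a, y) (b, y) := by
  rw [← Icc_prod_Icc, Icc_self]

lemma singleton_prod_Icc_eq_Icc (x a b : ℝ) : ({x} : Set ℝ) ×ˢ Icc a b = Icc (x, a) (x, b) := by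
  rw [← Icc_prod_Icc, Icc_self]

lemma segment_eq_Icc_of_axis_parallel {u v : ℝ × ℝ} (huv : u ≤ v) (h : u.1 = v.1 ∨ u.2 = v.2) :
    segment ℝ u v = Icc u v := by
  obtain ⟨u₁, u₂⟩ := u
  obtain ⟨v₁, v₂⟩ := v
  rcases h with rfl | rfl
  · rw [← Prod.image_mk_segment_right, segment_eq_Icc huv.2, ← Icc_prod_Icc, Icc_self,
      singleton_prod]
  · rw [← Prod.image_mk_segment_left, segment_eq_Icc huv.1, ← Icc_prod_Icc, Icc_self,
      prod_singleton]

lemma isChain_Icc_of_axis_parallel {u v : ℝ × ℝ} (h : u.1 = v.1 ∨ u.2 = v.2) :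
    IsChain (· ≤ ·) (Icc u v) := by
  rintro q ⟨huq, hqv⟩ r ⟨hur, hrv⟩ -
  rcases h with h | h
  · have hqr : q.1 = r.1 := by linarith [huq.1, hqv.1, hur.1, hrv.1]
    rcases le_total q.2 r.2 with h' | h'
    exacts [Or.inl ⟨hqr.le, h'⟩, Or.inr ⟨hqr.ge, h'⟩]
  · have hqr : q.2 = r.2 := by linarith [huq.2, hqv.2, hur.2, hrv.2]
    rcases le_total q.1 r.1 with h' | h'
    exacts [Or.inl ⟨h', hqr.le⟩, Or.inr ⟨h', hqr.ge⟩]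

namespace RectPath

variable {π : RectPath}

lemma IsRectilinear.vert_castSucc_le_succ (hr : π.IsRectilinear) (k : Fin π.N) :
    π.vert k.castSucc ≤ π.vert k.succ := by
  rcases hr k with ⟨h₁, h₂⟩ | ⟨h₂, h₁⟩
  exacts [⟨h₁.le, h₂.le⟩, ⟨h₁.le, h₂.le⟩]

lemma IsRectilinear.axis_parallel (hr : π.IsRectilinear) (k : Fin π.N) :
    (π.vert k.castSucc).1 = (π.vert k.succ).1 ∨ (π.vert k.castSucc).2 = (π.vert k.succ).2 :=
  (hr k).imp And.left And.left

lemma IsRectilinear.monotone_vert (hr : π.IsRectilinear) : Monotone π.vert :=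
  Fin.monotone_iff_le_succ.mpr hr.vert_castSucc_le_succ

lemma IsRectilinear.segment_eq_Icc (hr : π.IsRectilinear) (k : Fin π.N) :
    segment ℝ (π.vert k.castSucc) (π.vert k.succ) = Icc (π.vert k.castSucc) (π.vert k.succ) :=
  segment_eq_Icc_of_axis_parallel (hr.vert_castSucc_le_succ k) (hr.axis_parallel k)

lemma IsRectilinear.mem_image_iff (hr : π.IsRectilinear) {q : ℝ × ℝ} :
    q ∈ π.image ↔ q = π.vert 0 ∨ ∃ k : Fin π.N, q ∈ Icc (π.vert k.castSucc) (π.vert k.succ) := by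
  simp only [image, mem_insert_iff, mem_iUnion, hr.segment_eq_Icc]

lemma IsRectilinear.Icc_subset_image (hr : π.IsRectilinear) (k : Fin π.N) :
    Icc (π.vert k.castSucc) (π.vert k.succ) ⊆ π.image :=
  fun _ hq ↦ hr.mem_image_iff.mpr (Or.inr ⟨k, hq⟩)

lemma vert_mem_image (π : RectPath) (k : Fin (π.N + 1)) : π.vert k ∈ π.image := by
  induction k using Fin.cases with
  | zero => exact mem_insert _ _
  | succ k => exact Or.inr (mem_iUnion.mpr ⟨k, right_mem_segment ℝ _ _⟩)

lemma last_mem_image (π : RectPath) : π.last ∈ π.image := π.vert_mem_image _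

lemma IsRectilinear.vert_zero_le (hr : π.IsRectilinear) {q : ℝ × ℝ} (hq : q ∈ π.image) :
    π.vert 0 ≤ q := by
  rcases hr.mem_image_iff.mp hq with rfl | ⟨k, hk⟩
  exacts [le_rfl, (hr.monotone_vert (Fin.zero_le _)).trans hk.1]

lemma IsRectilinear.le_last (hr : π.IsRectilinear) {q : ℝ × ℝ} (hq : q ∈ π.image) :
    q ≤ π.last := by
  rcases hr.mem_image_iff.mp hq with rfl | ⟨k, hk⟩
  exacts [hr.monotone_vert (Fin.zero_le _), hk.2.trans (hr.monotone_vert (Fin.le_last _))]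

lemma IsRectilinear.isChain_image (hr : π.IsRectilinear) : IsChain (· ≤ ·) π.image := by
  have key : ∀ {k l : Fin π.N} {q r : ℝ × ℝ}, k < l →
      q ∈ Icc (π.vert k.castSucc) (π.vert k.succ) → r ∈ Icc (π.vert l.castSucc) (π.vert l.succ) →
      q ≤ r := fun hkl hq hr' ↦
    hq.2.trans ((hr.monotone_vert (Fin.succ_le_castSucc_iff.mpr hkl)).trans hr'.1)
  intro q hq r hr' _
  rcases hr.mem_image_iff.mp hq with rfl | ⟨k, hk⟩
  · exact Or.inl (hr.vert_zero_le hr')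
  rcases hr.mem_image_iff.mp hr' with rfl | ⟨l, hl⟩
  · exact Or.inr (hr.vert_zero_le hq)
  rcases lt_trichotomy k l with hkl | rfl | hlk
  · exact Or.inl (key hkl hk hl)
  · exact (isChain_Icc_of_axis_parallel (hr.axis_parallel k)).total hk hl
  · exact Or.inr (key hlk hl hk)

lemma IsRectilinear.exists_edge_of_ne_last (hr : π.IsRectilinear) {q : ℝ × ℝ}
    (hq : q ∈ π.image) (hql : q ≠ π.last) :
    ∃ k : Fin π.N, π.vert k.castSucc ≤ q ∧ q < π.vert k.succ := by
  by_contra! hstuck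
  have hle : ∀ k : Fin (π.N + 1), π.vert k ≤ q := by
    intro k
    induction k using Fin.induction with
    | zero => exact hr.vert_zero_le hq
    | succ k ih =>
      rcases hr.isChain_image.total hq (π.vert_mem_image k.succ) with h | h
      exacts [(h.eq_or_lt.resolve_right (hstuck k ih)).ge, h]
  exact hql (le_antisymm (hr.le_last hq) (hle _))

lemma IsRectilinear.vertical_or_horizontal_of_mem_edge (hr : π.IsRectilinear) {k : Fin π.N}
    {q : ℝ × ℝ} (hu : π.vert k.castSucc ≤ q) (hv : q < π.vert k.succ) :
    ((π.vert k.castSucc).1 = q.1 ∧ q.1 = (π.vert k.succ).1 ∧ q.2 < (π.vert k.succ).2) ∨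
      ((π.vert k.castSucc).2 = q.2 ∧ q.2 = (π.vert k.succ).2 ∧ q.1 < (π.vert k.succ).1) := by
  rcases hr k with ⟨h, -⟩ | ⟨h, -⟩
  · have h₁ : (π.vert k.castSucc).1 = q.1 := le_antisymm hu.1 (h ▸ hv.le.1)
    exact Or.inl ⟨h₁, h₁ ▸ h, hv.le.2.lt_of_ne fun h₂ ↦ hv.ne (Prod.ext (h₁ ▸ h) h₂)⟩
  · have h₂ : (π.vert k.castSucc).2 = q.2 := le_antisymm hu.2 (h ▸ hv.le.2)
    exact Or.inr ⟨h₂, h₂ ▸ h, hv.le.1.lt_of_ne fun h₁ ↦ hv.ne (Prod.ext h₁ (h₂ ▸ h))⟩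

lemma IsRectilinear.image_inter_Ici_eq_union (hr : π.IsRectilinear) {k : Fin π.N}
    {q w : ℝ × ℝ} (hq : π.vert k.castSucc ≤ q) (hqw : q ≤ w) (hw : w ≤ π.vert k.succ) :
    π.image ∩ Ici q = Icc q w ∪ π.image ∩ Ici w := by
  have hsub : Icc q w ⊆ π.image :=
    (Icc_subset_Icc hq hw).trans (hr.Icc_subset_image k)
  ext r
  constructor
  · rintro ⟨hr', hqr⟩
    rcases hr.isChain_image.total hr' (hsub ⟨hqw, le_rfl⟩) with h | h
    exacts [Or.inl ⟨hqr, h⟩, Or.inr ⟨hr', h⟩]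
  · rintro (h | ⟨hr', hwr⟩)
    exacts [⟨hsub h, h.1⟩, ⟨hr', hqw.trans hwr⟩]

lemma IsRectilinear.image_inter_Ici_of_eq_last (hr : π.IsRectilinear) {q : ℝ × ℝ}
    (hq : q = π.last) : π.image ∩ Ici q = {q} := by
  subst hq
  ext r
  refine ⟨fun h ↦ le_antisymm (hr.le_last h.1) h.2, ?_⟩
  rintro rfl
  exact ⟨π.last_mem_image, self_mem_Ici⟩

open Classical in
def numVertsNotLE (π : RectPath) (q : ℝ × ℝ) : ℕ :=
  (Finset.univ.filter fun k ↦ ¬ π.vert k ≤ q).card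

lemma numVertsNotLE_le_of_le {q r : ℝ × ℝ} (hqr : q ≤ r) :
    π.numVertsNotLE r ≤ π.numVertsNotLE q :=
  Finset.card_le_card fun _ ↦ by simpa using fun hk h ↦ hk (h.trans hqr)

lemma numVertsNotLE_lt_of_le {q r : ℝ × ℝ} (hqr : q ≤ r) {k : Fin (π.N + 1)}
    (hkq : ¬ π.vert k ≤ q) (hkr : π.vert k ≤ r) : π.numVertsNotLE r < π.numVertsNotLE q :=
  Finset.card_lt_card <| (Finset.ssubset_iff_of_subset fun _ ↦ by
    simpa using fun hk h ↦ hk (h.trans hqr)).mpr ⟨k, by simpa using hkq, by simpa using hkr⟩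

-- Reducible, so that `simp` sees `Fin (π.snoc w).N` as `Fin (π.N + 1)`.
abbrev snoc (π : RectPath) (w : ℝ × ℝ) : RectPath := ⟨π.N + 1, Fin.snoc π.vert w⟩

@[simp]
lemma snoc_last (w : ℝ × ℝ) : (π.snoc w).last = w := by
  simp [snoc, last]

lemma snoc_image (w : ℝ × ℝ) : (π.snoc w).image = π.image ∪ segment ℝ π.last w := by
  simp only [image, insert_union]
  rw [iUnion_fin_add_one_eq_iUnion_castSucc]
  simp [Function.comp_def, last]

lemma IsRectilinear.snoc (hr : π.IsRectilinear) {w : ℝ × ℝ}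
    (hw : (π.last.1 = w.1 ∧ π.last.2 < w.2) ∨ (π.last.2 = w.2 ∧ π.last.1 < w.1)) :
    (π.snoc w).IsRectilinear := by
  intro k
  change Fin (π.N + 1) at k
  induction k using Fin.lastCases with
  | last => simpa [last] using hw
  | cast k => simpa using hr k

end RectPath

lemma PrefixMin.trans_of_le {A : ℝ → ℝ} {s₁ s₂ i b : ℤ} (hi : PrefixMin A s₁ i)
    (hb : PrefixMin A s₂ b) (hs : s₂ ≤ i) (hib : i ≤ b) : PrefixMin A s₁ b := by
  refine ⟨hi.1.trans hib, fun x hx ↦ ?_⟩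
  rcases le_total x i with hxi | hix
  · calc |A b| ≤ |A i| := hb.2 i ⟨by exact_mod_cast hs, by exact_mod_cast hib⟩
      _ ≤ |A x| := hi.2 x ⟨hx.1, hxi⟩
  · exact hb.2 x ⟨le_trans (by exact_mod_cast hs) hix, hx.2⟩

lemma prefixMin_of_isMinOn {A : ℝ → ℝ} {c e : ℤ} {S : Set ℝ} (hce : c ≤ e)
    (hmin : IsMinOn A S e) (hS : Icc (c : ℝ) e ⊆ S) (hA : ∀ x ∈ Icc (c : ℝ) e, 0 ≤ A x) :
    PrefixMin A c e := by
  refine ⟨hce, fun x hx ↦ ?_⟩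
  have he : (e : ℝ) ∈ Icc (c : ℝ) e := ⟨by exact_mod_cast hce, le_rfl⟩
  rw [abs_of_nonneg (hA _ he), abs_of_nonneg (hA x hx)]
  exact hmin (hS hx)

lemma IsPoly1D.min_le_of_mem_Icc {B : ℝ → ℝ} {m : ℕ} (hB : IsPoly1D B m) {k : ℤ} (hk : 1 ≤ k)
    (hkm : k < m) {y : ℝ} (hy : y ∈ Icc (k : ℝ) (k + 1)) : min (B k) (B (k + 1)) ≤ B y := by
  lift k to ℕ using by omega
  push_cast at hy ⊢
  rw [hB k (by exact_mod_cast hk) (by exact_mod_cast hkm) y hy]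
  have ht : 0 ≤ y - k := by linarith [hy.1]
  have ht' : y - k ≤ 1 := by linarith [hy.2]
  rcases le_total (B k) (B (k + 1)) with h | h
  · rw [min_eq_left h]; nlinarith
  · rw [min_eq_right h]; nlinarith

lemma IsPoly1D.exists_int_isMinOn {B : ℝ → ℝ} {m : ℕ} (hB : IsPoly1D B m) {c : ℤ} (hc : 1 ≤ c)
    {j : ℤ} (hcj : c ≤ j) (hjm : j ≤ m) :
    ∃ e : ℤ, c ≤ e ∧ e ≤ j ∧ IsMinOn B (Icc (c : ℝ) j) e := by
  induction j, hcj using Int.leInduction with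
  | base => exact ⟨c, le_rfl, le_rfl, fun y hy ↦ (congrArg B (le_antisymm hy.2 hy.1)).ge⟩
  | succ j hcj ih =>
    obtain ⟨e, hce, hej, he⟩ := ih (by omega)
    have hmin : ∀ y ∈ Icc (c : ℝ) (j + 1), min (B e) (B (j + 1)) ≤ B y := by
      intro y hy
      rcases le_total y j with hyj | hjy
      · exact (min_le_left _ _).trans (he ⟨hy.1, hyj⟩)
      · have hBej : B e ≤ B j := he ⟨by exact_mod_cast hcj, le_rfl⟩
        calc min (B e) (B (j + 1)) ≤ min (B j) (B (j + 1)) := min_le_min_right _ hBej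
          _ ≤ B y := hB.min_le_of_mem_Icc (hc.trans hcj) (by omega) ⟨hjy, hy.2⟩
    push_cast
    rcases le_total (B e) (B (j + 1)) with h | h
    · exact ⟨e, hce, by omega, fun y hy ↦ min_eq_left h ▸ hmin y hy⟩
    · exact ⟨j + 1, by omega, le_rfl, fun y hy ↦ by
        simpa [min_eq_right h] using hmin y hy⟩

section

variable {R B : ℝ → ℝ} {n m : ℕ} {δ : ℝ} {s s' : ℤ × ℤ} {π π' : RectPath}

open RectPath

lemma IsPMMatching.prefixMin_of_vert_eq (hπ : IsPMMatching R B n m δ s π) {k : Fin (π.N + 1)}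
    {i j : ℤ} (hk : π.vert k = ((i : ℝ), (j : ℝ))) : PrefixMin R s.1 i ∧ PrefixMin B s.2 j := by
  obtain ⟨i', j', hk', hi, hj⟩ := hπ.2.2.2 k
  simp only [hk, Prod.mk.injEq, Int.cast_inj] at hk'
  obtain ⟨rfl, rfl⟩ := hk'
  exact ⟨hi, hj⟩

lemma IsMaximalHG.not_isHorizGreedy_snoc (hπ : IsMaximalHG R B n m δ s π) {w : ℝ × ℝ}
    (hw : ¬ w ≤ π.last) : ¬ IsHorizGreedy R B n m δ s (π.snoc w) := by
  intro hext
  have hw' : w ∈ (π.snoc w).image := by simpa using (π.snoc w).last_mem_image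
  rw [hπ.2 _ hext (snoc_image w ▸ subset_union_left)] at hw'
  exact hw (hπ.1.1.1.le_last hw')

lemma IsHorizGreedy.snoc (hπ : IsHorizGreedy R B n m δ s π) {i j : ℤ} {w : ℝ × ℝ}
    (hw : w = ((i : ℝ), (j : ℝ))) (hi : PrefixMin R s.1 i) (hj : PrefixMin B s.2 j)
    (hstep : (π.last.1 = w.1 ∧ π.last.2 < w.2) ∨ (π.last.2 = w.2 ∧ π.last.1 < w.1))
    (hfree : Icc π.last w ⊆ freeSpace R B n m δ)
    (hnew : ∀ i' j' : ℤ, ((i' : ℝ), (j' : ℝ)) ∈ Icc π.last w →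
      PrefixMin R s.1 i' → PrefixMin B s.2 j' →
      ∀ ihat : ℤ, i' < ihat → PrefixMin R s.1 ihat →
        Icc (i' : ℝ) ihat ×ˢ ({(j' : ℝ)} : Set ℝ) ⊆ freeSpace R B n m δ →
        Icc (i' : ℝ) ihat ×ˢ ({(j' : ℝ)} : Set ℝ) ⊆ Icc π.last w ∨ w = ((i' : ℝ), (j' : ℝ))) :
    IsHorizGreedy R B n m δ s (π.snoc w) := by
  obtain ⟨⟨hr, h0, hfree₀, hverts⟩, hgreedy⟩ := hπ
  have hlw : π.last ≤ w := by
    rcases hstep with ⟨h₁, h₂⟩ | ⟨h₂, h₁⟩ <;> exact ⟨by linarith, by linarith⟩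
  have himage : (π.snoc w).image = π.image ∪ Icc π.last w := by
    rw [snoc_image, segment_eq_Icc_of_axis_parallel hlw (hstep.imp And.left And.left)]
  refine ⟨⟨hr.snoc hstep, by simpa using h0, himage ▸ union_subset hfree₀ hfree, fun k ↦ ?_⟩, ?_⟩
  · change Fin (π.N + 1 + 1) at k
    induction k using Fin.lastCases with
    | last => exact ⟨i, j, by simpa [last] using hw, hi, hj⟩
    | cast k => simpa using hverts k
  · intro i' j' hpt hi' hj' ihat hlt hihat hrow
    rw [himage] at hpt ⊢
    rw [snoc_last]
    have hnew' (hmem : ((i' : ℝ), (j' : ℝ)) ∈ Icc π.last w) :=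
      (hnew i' j' hmem hi' hj' ihat hlt hihat hrow).imp_left
        (·.trans (subset_union_right (s := π.image)))
    rcases hpt with hold | hseg
    · rcases hgreedy i' j' hold hi' hj' ihat hlt hihat hrow with h | h
      · exact Or.inl (h.trans subset_union_left)
      · exact hnew' (h ▸ ⟨le_rfl, hlw⟩)
    · exact hnew' hseg

lemma IsMaximalHG.not_free_row_at_last (hπ : IsMaximalHG R B n m δ s π) {i j b : ℤ}
    (hlast : π.last = ((i : ℝ), (j : ℝ))) (hib : i < b) (hb : PrefixMin R s.1 b) :
    ¬ Icc (i : ℝ) b ×ˢ ({(j : ℝ)} : Set ℝ) ⊆ freeSpace R B n m δ := by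
  intro hrow
  obtain ⟨b₀, ⟨hib₀, hb₀, hrow₀⟩, hmax⟩ := Int.exists_greatest_of_bdd
    (P := fun b ↦ i < b ∧ PrefixMin R s.1 b ∧
      Icc (i : ℝ) b ×ˢ ({(j : ℝ)} : Set ℝ) ⊆ freeSpace R B n m δ)
    ⟨n, fun b ⟨hib, _, hrow⟩ ↦ by
      have : (b : ℝ) ≤ n := (hrow (a := ((b : ℝ), (j : ℝ)))
        ⟨⟨Int.cast_le.mpr hib.le, le_rfl⟩, rfl⟩).1.2
      exact_mod_cast this⟩
    ⟨b, hib, hb, hrow⟩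
  have hj := (hπ.1.1.prefixMin_of_vert_eq hlast).2
  refine hπ.not_isHorizGreedy_snoc (w := ((b₀ : ℝ), (j : ℝ)))
    (fun h ↦ by
      have : (b₀ : ℝ) ≤ i := by simpa [hlast] using h.1
      norm_cast at this; omega) <| hπ.1.snoc rfl hb₀ hj
    (Or.inr ⟨by rw [hlast], by simpa [hlast] using hib₀⟩)
    (by rwa [hlast, ← Icc_prod_singleton_eq_Icc]) ?_
  intro i' j' hpt _ _ ihat hlt hihat hrow'
  rw [hlast, ← Icc_prod_singleton_eq_Icc] at hpt ⊢
  obtain ⟨⟨hii' : (i : ℝ) ≤ i', hi'b₀ : (i' : ℝ) ≤ b₀⟩, hj' : (j' : ℝ) = j⟩ := hpt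
  rw [hj'] at hrow' ⊢
  have hrow'' : Icc (i : ℝ) ihat ×ˢ ({(j : ℝ)} : Set ℝ) ⊆ freeSpace R B n m δ := by
    rintro z ⟨⟨hiz, hzi⟩, hz⟩
    rcases le_total z.1 i' with h | h
    exacts [hrow₀ ⟨⟨hiz, h.trans hi'b₀⟩, hz⟩, hrow' ⟨⟨h, hzi⟩, hz⟩]
  have hihat₀ : ihat ≤ b₀ := hmax ihat ⟨(Int.cast_le.mp hii').trans_lt hlt, hihat, hrow''⟩
  exact Or.inl (prod_mono (Icc_subset_Icc hii' (by exact_mod_cast hihat₀)) subset_rfl)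

lemma IsMaximalHG.not_free_column_at_last (hπ : IsMaximalHG R B n m δ s π) {i j d : ℤ}
    (hlast : π.last = ((i : ℝ), (j : ℝ))) (hjd : j < d) (hd : PrefixMin B s.2 d) :
    ¬ ({(i : ℝ)} : Set ℝ) ×ˢ Icc (j : ℝ) d ⊆ freeSpace R B n m δ := by
  intro hcol
  obtain ⟨d₀, ⟨hjd₀, hd₀, hcol₀⟩, hmin⟩ := Int.exists_least_of_bdd
    (P := fun d ↦ j < d ∧ PrefixMin B s.2 d ∧
      ({(i : ℝ)} : Set ℝ) ×ˢ Icc (j : ℝ) d ⊆ freeSpace R B n m δ)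
    ⟨j, fun d hd ↦ hd.1.le⟩ ⟨d, hjd, hd, hcol⟩
  have hi := (hπ.1.1.prefixMin_of_vert_eq hlast).1
  refine hπ.not_isHorizGreedy_snoc (w := ((i : ℝ), (d₀ : ℝ)))
    (fun h ↦ by
      have : (d₀ : ℝ) ≤ j := by simpa [hlast] using h.2
      norm_cast at this; omega) <| hπ.1.snoc rfl hi hd₀
    (Or.inl ⟨by rw [hlast], by simpa [hlast] using hjd₀⟩)
    (by rwa [hlast, ← singleton_prod_Icc_eq_Icc]) ?_
  intro i' j' hpt _ hj' ihat hlt hihat hrow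
  rw [hlast, ← singleton_prod_Icc_eq_Icc] at hpt ⊢
  obtain ⟨hi' : (i' : ℝ) = i, hjj' : (j : ℝ) ≤ j', hj'd₀ : (j' : ℝ) ≤ d₀⟩ := hpt
  obtain rfl : i' = i := by exact_mod_cast hi'
  rcases (Int.cast_le.mp hjj').eq_or_lt with rfl | hjj''
  · exact absurd hrow (hπ.not_free_row_at_last hlast hlt hihat)
  · have hd₀j' : d₀ ≤ j' :=
      hmin j' ⟨hjj'', hj', fun z ⟨hz, hzj, hzj'⟩ ↦ hcol₀ ⟨hz, hzj, hzj'.trans hj'd₀⟩⟩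
    exact Or.inr (by rw [le_antisymm (Int.cast_le.mp hj'd₀) hd₀j'])

lemma IsHorizGreedy.not_free_row_across_vertical_edge (hB : IsPoly1D B m)
    (hsepB : ∀ y ∈ Icc (1 : ℝ) m, 0 ≤ B y) (hπ : IsHorizGreedy R B n m δ s π) {k : Fin π.N}
    {i c d j b : ℤ} (hu : π.vert k.castSucc = ((i : ℝ), (c : ℝ)))
    (hv : π.vert k.succ = ((i : ℝ), (d : ℝ))) (hcj : c ≤ j) (hjd : j < d) (hib : i < b)
    (hb : PrefixMin R s.1 b) : ¬ Icc (i : ℝ) b ×ˢ ({(j : ℝ)} : Set ℝ) ⊆ freeSpace R B n m δ := by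
  intro hrow
  obtain ⟨hi, hc⟩ := hπ.1.prefixMin_of_vert_eq hu
  obtain ⟨⟨hr, -, hfree, -⟩, hgreedy⟩ := hπ
  have hc₁ : (1 : ℝ) ≤ c := (hfree (hu ▸ π.vert_mem_image _)).2.1.1
  have hjm : (j : ℝ) ≤ m :=
    (hrow (a := ((i : ℝ), (j : ℝ))) ⟨⟨le_rfl, Int.cast_le.mpr hib.le⟩, rfl⟩).2.1.2
  obtain ⟨e, hce, hej, he⟩ :=
    hB.exists_int_isMinOn (by exact_mod_cast hc₁) hcj (by exact_mod_cast hjm)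
  have hce' : (c : ℝ) ≤ e := Int.cast_le.mpr hce
  have hej' : (e : ℝ) ≤ j := Int.cast_le.mpr hej
  have hBe : PrefixMin B s.2 e := hc.trans_of_le (prefixMin_of_isMinOn hce he
    (Icc_subset_Icc_right hej') fun y hy ↦ hsepB y ⟨hc₁.trans hy.1, hy.2.trans (hej'.trans hjm)⟩)
    le_rfl hce
  have hrow_e : Icc (i : ℝ) b ×ˢ ({(e : ℝ)} : Set ℝ) ⊆ freeSpace R B n m δ := by
    rintro ⟨x, y⟩ ⟨hx, rfl : y = e⟩
    obtain ⟨hx₁, -, hxj⟩ := hrow (a := (x, (j : ℝ))) ⟨hx, rfl⟩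
    have : B e ≤ B j := he ⟨Int.cast_le.mpr hcj, le_rfl⟩
    exact ⟨hx₁, ⟨hc₁.trans hce', hej'.trans hjm⟩, by dsimp only at hxj ⊢; linarith⟩
  have hie : ((i : ℝ), (e : ℝ)) ∈ π.image := hr.Icc_subset_image k
    ⟨hu ▸ ⟨le_rfl, hce'⟩, hv ▸ ⟨le_rfl, hej'.trans (Int.cast_le.mpr hjd.le)⟩⟩
  have hid : ((i : ℝ), (d : ℝ)) ∈ π.image := hv ▸ π.vert_mem_image _
  have hde : ¬ (d : ℝ) ≤ e := fun h ↦ by have := Int.cast_le.mp h; omega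
  rcases hgreedy i e hie hi hBe b hib hb hrow_e with hsub | hlast
  · have hbe := hsub (a := ((b : ℝ), (e : ℝ))) ⟨⟨Int.cast_le.mpr hib.le, le_rfl⟩, rfl⟩
    rcases hr.isChain_image.total hbe hid with h | h
    · have := Int.cast_le.mp h.1; omega
    · exact hde h.2
  · exact hde (hlast ▸ hr.le_last hid).2

lemma IsMaximalHG.last_eq_of_last_mem (hπ : IsMaximalHG R B n m δ s π)
    (hπ' : IsPMMatching R B n m δ s' π') (hmem : π.last ∈ π'.image) : π.last = π'.last := by
  by_contra hne
  obtain ⟨hr', h0', hfree', hverts'⟩ := hπ'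
  obtain ⟨k, hu, hv⟩ := hr'.exists_edge_of_ne_last hmem hne
  obtain ⟨i, j, hlast, hi, hj⟩ := hπ.1.1.2.2.2 (Fin.last _)
  obtain ⟨a, c, hac, ha, hc⟩ := hverts' k.succ
  have hs' : π'.vert 0 ≤ π.last := hr'.vert_zero_le hmem
  change π.last = _ at hlast
  rw [h0', hlast, Prod.mk_le_mk, Int.cast_le, Int.cast_le] at hs'
  have hstep : Icc π.last (π'.vert k.succ) ⊆ freeSpace R B n m δ :=
    (Icc_subset_Icc_left hu).trans ((hr'.Icc_subset_image k).trans hfree')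
  rw [hlast, hac] at hstep
  rcases hr'.vertical_or_horizontal_of_mem_edge hu hv with ⟨-, hia, hjc⟩ | ⟨-, hjc, hia⟩
  all_goals rw [hlast, hac] at hia hjc; dsimp only at hia hjc
  · obtain rfl : i = a := by exact_mod_cast hia
    have hjc : j < c := by exact_mod_cast hjc
    exact hπ.not_free_column_at_last hlast hjc (hj.trans_of_le hc hs'.2 hjc.le)
      (by rwa [singleton_prod_Icc_eq_Icc])
  · obtain rfl : j = c := by exact_mod_cast hjc
    have hia : i < a := by exact_mod_cast hia
    exact hπ.not_free_row_at_last hlast hia (hi.trans_of_le ha hs'.1 hia.le)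
      (by rwa [Icc_prod_singleton_eq_Icc])

lemma IsHorizGreedy.not_vertical_across_horizontal_edge (hB : IsPoly1D B m) (hsepB : ∀ y ∈ Icc (1 : ℝ) m, 0 ≤ B y)
    (hπ : IsPMMatching R B n m δ s π) (hπ' : IsHorizGreedy R B n m δ s' π')
    {k : Fin π.N} {k' : Fin π'.N} {q : ℝ × ℝ}
    (hu : π.vert k.castSucc ≤ q) (hv : q < π.vert k.succ) (hhor : q.2 = (π.vert k.succ).2)
    (hu' : π'.vert k'.castSucc ≤ q) (hv' : q < π'.vert k'.succ)
    (hvert : (π'.vert k'.castSucc).1 = q.1 ∧ q.1 = (π'.vert k'.succ).1) : False := by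
  have hrow : Icc q (π.vert k.succ) ⊆ freeSpace R B n m δ :=
    (Icc_subset_Icc_left hu).trans ((hπ.1.Icc_subset_image k).trans hπ.2.2.1)
  have hs : π.vert 0 ≤ q := hπ.1.vert_zero_le (hπ.1.Icc_subset_image k ⟨hu, hv.le⟩)
  obtain ⟨b, j, hbj, hb, -⟩ := hπ.2.2.2 k.succ
  obtain ⟨i₁, c, hic, hi, -⟩ := hπ'.1.2.2.2 k'.castSucc
  obtain ⟨i, d, hid, -, -⟩ := hπ'.1.2.2.2 k'.succ
  obtain ⟨x, y⟩ := q
  rw [hbj] at hv hhor hrow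
  rw [hic] at hu' hvert
  rw [hid] at hv' hvert
  rw [hπ.2.1] at hs
  dsimp only at hhor hvert
  obtain ⟨rfl, rfl⟩ : x = i ∧ y = j := ⟨hvert.2, hhor⟩
  obtain rfl : i₁ = i := by exact_mod_cast hvert.1
  have hib : i₁ < b := Int.cast_lt.mp (Prod.mk_lt_mk_iff_left.mp hv)
  refine hπ'.not_free_row_across_vertical_edge hB hsepB hic hid (Int.cast_le.mp hu'.2)
    (Int.cast_lt.mp (Prod.mk_lt_mk_iff_right.mp hv')) hib
    (hi.trans_of_le hb (Int.cast_le.mp hs.1) hib.le) ?_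
  rwa [Icc_prod_singleton_eq_Icc]

lemma IsHorizGreedy.le_total_edge_ends (hB : IsPoly1D B m) (hsepB : ∀ y ∈ Icc (1 : ℝ) m, 0 ≤ B y)
    (hπ : IsHorizGreedy R B n m δ s π) (hπ' : IsHorizGreedy R B n m δ s' π')
    {k : Fin π.N} {k' : Fin π'.N} {q : ℝ × ℝ}
    (hu : π.vert k.castSucc ≤ q) (hv : q < π.vert k.succ)
    (hu' : π'.vert k'.castSucc ≤ q) (hv' : q < π'.vert k'.succ) :
    π.vert k.succ ≤ π'.vert k'.succ ∨ π'.vert k'.succ ≤ π.vert k.succ := by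
  rcases hπ.1.1.vertical_or_horizontal_of_mem_edge hu hv with ⟨hx₀, hx, -⟩ | ⟨-, hy, -⟩ <;>
    rcases hπ'.1.1.vertical_or_horizontal_of_mem_edge hu' hv' with ⟨hx₀', hx', -⟩ | ⟨-, hy', -⟩
  · rcases le_total (π.vert k.succ).2 (π'.vert k'.succ).2 with h | h
    exacts [Or.inl ⟨(hx.symm.trans hx').le, h⟩, Or.inr ⟨(hx'.symm.trans hx).le, h⟩]
  · exact (IsHorizGreedy.not_vertical_across_horizontal_edge hB hsepB hπ'.1 hπ hu' hv' hy' hu hv ⟨hx₀, hx⟩).elim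
  · exact (IsHorizGreedy.not_vertical_across_horizontal_edge hB hsepB hπ.1 hπ' hu hv hy hu' hv' ⟨hx₀', hx'⟩).elim
  · rcases le_total (π.vert k.succ).1 (π'.vert k'.succ).1 with h | h
    exacts [Or.inl ⟨h, (hy.symm.trans hy').le⟩, Or.inr ⟨h, (hy'.symm.trans hy).le⟩]

theorem IsMaximalHG.image_inter_Ici_eq (hB : IsPoly1D B m) (hsepB : ∀ y ∈ Icc (1 : ℝ) m, 0 ≤ B y)
    (hπ : IsMaximalHG R B n m δ s π) (hπ' : IsMaximalHG R B n m δ s' π') {q : ℝ × ℝ}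
    (hq : q ∈ π.image) (hq' : q ∈ π'.image) : π.image ∩ Ici q = π'.image ∩ Ici q := by
  induction hN : π.numVertsNotLE q + π'.numVertsNotLE q using Nat.strong_induction_on
    generalizing q with
  | _ N ih =>
  have hr := hπ.1.1.1
  have hr' := hπ'.1.1.1
  by_cases hl : q = π.last
  · have hl' : q = π'.last := hl.trans (hπ.last_eq_of_last_mem hπ'.1.1 (hl ▸ hq'))
    rw [hr.image_inter_Ici_of_eq_last hl, hr'.image_inter_Ici_of_eq_last hl']
  have hl' : q ≠ π'.last := fun hl' ↦ hl (hl'.trans (hπ'.last_eq_of_last_mem hπ.1.1 (hl' ▸ hq)))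
  obtain ⟨k, hu, hv⟩ := hr.exists_edge_of_ne_last hq hl
  obtain ⟨k', hu', hv'⟩ := hr'.exists_edge_of_ne_last hq' hl'
  set w := π.vert k.succ ⊓ π'.vert k'.succ
  have hqw : q ≤ w := le_inf hv.le hv'.le
  have hdrop : π.numVertsNotLE w + π'.numVertsNotLE w < N := by
    have h₁ := numVertsNotLE_le_of_le (π := π) hqw
    have h₂ := numVertsNotLE_le_of_le (π := π') hqw
    rcases IsHorizGreedy.le_total_edge_ends hB hsepB hπ.1 hπ'.1 hu hv hu' hv' with h | h
    · have := numVertsNotLE_lt_of_le hqw hv.not_ge (le_inf le_rfl h); omega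
    · have := numVertsNotLE_lt_of_le hqw hv'.not_ge (le_inf h le_rfl); omega
  rw [hr.image_inter_Ici_eq_union hu hqw inf_le_left,
    hr'.image_inter_Ici_eq_union hu' hqw inf_le_right,
    ih _ hdrop (hr.Icc_subset_image k ⟨hu.trans hqw, inf_le_left⟩)
      (hr'.Icc_subset_image k' ⟨hu'.trans hqw, inf_le_right⟩) rfl]

end

lemma inter_Icc_prod_Icc_eq_inter_Ici {R B : ℝ → ℝ} {n m : ℕ} {δ : ℝ} {S : Set (ℝ × ℝ)}
    (hS : S ⊆ freeSpace R B n m δ) (p : ℝ × ℝ) :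
    S ∩ (Icc p.1 (n : ℝ) ×ˢ Icc p.2 (m : ℝ)) = S ∩ Ici p := by
  ext z
  exact ⟨fun ⟨hz, h₁, h₂⟩ ↦ ⟨hz, h₁.1, h₂.1⟩,
    fun ⟨hz, hpz⟩ ↦ ⟨hz, ⟨hpz.1, (hS hz).1.2⟩, ⟨hpz.2, (hS hz).2.1.2⟩⟩⟩

theorem greedy_paths_merge_general
    (n m : ℕ)
    (R B : ℝ → ℝ) (hB : IsPoly1D B m)
    (hsepB : ∀ y ∈ Icc (1:ℝ) (m : ℝ), 0 ≤ B y)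
    (δ : ℝ)
    (s s' : ℤ × ℤ)
    (π π' : RectPath)
    (hπ : IsMaximalHG R B n m δ s π) (hπ' : IsMaximalHG R B n m δ s' π')
    (p : ℝ × ℝ) (hp : p ∈ π.image ∩ π'.image) :
    π.image ∩ (Icc p.1 (n : ℝ) ×ˢ Icc p.2 (m : ℝ)) =
      π'.image ∩ (Icc p.1 (n : ℝ) ×ˢ Icc p.2 (m : ℝ)) := by
  rw [inter_Icc_prod_Icc_eq_inter_Ici hπ.1.1.2.2.1, inter_Icc_prod_Icc_eq_inter_Ici hπ'.1.1.2.2.1]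
  exact IsMaximalHG.image_inter_Ici_eq hB hsepB hπ hπ' hp.1 hp.2

/-- If two maximal horizontal-greedy `δ`-matchings `π` and `π'`
(starting at `s` and `s'`) share a point `p`, then they are identical from `p`
onwards: their images agree inside `[p₁, n] × [p₂, m]`. -/
theorem greedy_paths_merge
    (n m : ℕ) (hn : 1 ≤ n) (hm : 1 ≤ m)
    (R B : ℝ → ℝ) (hR : IsPoly1D R n) (hB : IsPoly1D B m)
    (hsepR : ∀ x ∈ Icc (1:ℝ) (n : ℝ), R x ≤ 0)
    (hsepB : ∀ y ∈ Icc (1:ℝ) (m : ℝ), 0 ≤ B y)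
    (hgpR : GeneralPosition R n) (hgpB : GeneralPosition B m)
    (δ : ℝ) (hδ : 0 ≤ δ)
    (s s' : ℤ × ℤ)
    (hs : ((s.1 : ℝ), (s.2 : ℝ)) ∈ freeSpace R B n m δ)
    (hs' : ((s'.1 : ℝ), (s'.2 : ℝ)) ∈ freeSpace R B n m δ)
    (π π' : RectPath)
    (hπ : IsMaximalHG R B n m δ s π) (hπ' : IsMaximalHG R B n m δ s' π')
    (p : ℝ × ℝ) (hp : p ∈ π.image ∩ π'.image) :
    π.image ∩ (Icc p.1 (n : ℝ) ×ˢ Icc p.2 (m : ℝ)) =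
      π'.image ∩ (Icc p.1 (n : ℝ) ×ˢ Icc p.2 (m : ℝ)) :=
  greedy_paths_merge_general n m R B hB hsepB δ s s' π π' hπ hπ' p hp
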